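/- Let f̃(x) = log₂(x)/(log₂(4+log₂ x))³. Then for all x ≥ 1 and y ≥ 0, f̃(x+y) ≤ f̃(x) + 1.5·y, and for all x ≥ 3000², f̃'(x) ≥ 0.32/(x·(log₂(4+log₂ x))³). -/

import Mathlib

noncomputable def ft (x : ℝ) : ℝ := Real.logb 2 x / (Real.logb 2 (4 + Real.logb 2 x)) ^ 3

/-! Write `u = logb 2 x`, `t = 4 + u` and `D = logb 2 t`. On `[1, ∞)` the denominator `D` is
increasing and at least `2`, so `ft (x + y) - ft x ≤ (logb 2 (x + y) - logb 2 x) / 8 ≤ y / (8 log 2)`.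
The derivative is `ft' x = (1 - 3u / (t log t)) / (x log 2 D³)`. For `x ≥ 3000² > 2²³` we have
`t ≥ 27`, and the tangent line of `log` at `27` gives `3 (t - 4) ≤ 0.778 t log t`, which suffices
because `0.32 log 2 < 0.222`. -/

open Real

theorem hasDerivAt_logb (b : ℝ) {x : ℝ} (hx : x ≠ 0) : HasDerivAt (logb b) (x⁻¹ / log b) x :=
  (hasDerivAt_log hx).div_const (log b)

theorem HasDerivAt.logb {f : ℝ → ℝ} {f' x : ℝ} (b : ℝ) (hf : HasDerivAt f f' x) (hx : f x ≠ 0) :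
    HasDerivAt (fun y => logb b (f y)) (f' / f x / Real.log b) x :=
  (hf.log hx).div_const (Real.log b)

theorem logb_add_sub_logb_le {b x y : ℝ} (hb : 1 < b) (hx : 0 < x) (hy : 0 ≤ y) :
    logb b (x + y) - logb b x ≤ y / (x * log b) := by
  rw [← logb_div (by positivity) hx.ne', logb, ← div_div, div_le_div_iff_of_pos_right (log_pos hb)]
  calc log ((x + y) / x) ≤ (x + y) / x - 1 := log_le_sub_one_of_pos (by positivity)
    _ = y / x := by field_simp; ring

theorem two_le_logb_two_four_add {u : ℝ} (hu : 0 ≤ u) : 2 ≤ logb 2 (4 + u) := by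
  calc (2 : ℝ) = logb 2 (2 ^ 2) := by rw [logb_pow, logb_self_eq_one one_lt_two]; norm_num
    _ ≤ logb 2 (4 + u) := logb_le_logb_of_le one_lt_two (by norm_num) (by linarith)

theorem ft_add_le {x y : ℝ} (hx : 1 ≤ x) (hy : 0 ≤ y) : ft (x + y) ≤ ft x + 1.5 * y := by
  have hL₁ : 0 ≤ logb 2 x := logb_nonneg one_lt_two hx
  have hL : logb 2 x ≤ logb 2 (x + y) := logb_le_logb_of_le one_lt_two (by linarith) (by linarith)
  have hD₁ : 2 ≤ logb 2 (4 + logb 2 x) := two_le_logb_two_four_add hL₁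
  have hD : logb 2 (4 + logb 2 x) ≤ logb 2 (4 + logb 2 (x + y)) :=
    logb_le_logb_of_le one_lt_two (by linarith) (by linarith)
  have hgrowth : logb 2 (x + y) - logb 2 x ≤ 2 * y := by
    refine (logb_add_sub_logb_le one_lt_two (by linarith) hy).trans ?_
    rw [div_le_iff₀ (by have := log_two_gt_d9; positivity)]
    nlinarith [mul_nonneg hy (show 0 ≤ 2 * x * log 2 - 1 by nlinarith [log_two_gt_d9])]
  set L₁ := logb 2 x
  set L₂ := logb 2 (x + y)
  set D₁ := logb 2 (4 + L₁)
  have hD₁3 : 8 ≤ D₁ ^ 3 := by nlinarith [pow_le_pow_left₀ zero_le_two hD₁ 3]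
  calc ft (x + y) = L₂ / logb 2 (4 + L₂) ^ 3 := rfl
    _ ≤ L₂ / D₁ ^ 3 := by gcongr; linarith
    _ = ft x + (L₂ - L₁) / D₁ ^ 3 := by simp only [ft]; ring
    _ ≤ ft x + (L₂ - L₁) / 8 := by gcongr
    _ ≤ ft x + 1.5 * y := by linarith

theorem hasDerivAt_ft {x : ℝ} (hx : 1 ≤ x) :
    HasDerivAt ft ((1 - 3 * logb 2 x / ((4 + logb 2 x) * log (4 + logb 2 x))) /
      (x * log 2 * logb 2 (4 + logb 2 x) ^ 3)) x := by
  have hx0 : x ≠ 0 := by positivity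
  have hu : 0 ≤ logb 2 x := logb_nonneg one_lt_two hx
  have ht : 4 + logb 2 x ≠ 0 := by positivity
  have hD : 0 < logb 2 (4 + logb 2 x) := by linarith [two_le_logb_two_four_add hu]
  have hlog : log (4 + logb 2 x) = logb 2 (4 + logb 2 x) * log 2 :=
    (div_mul_cancel₀ _ (log_pos one_lt_two).ne').symm
  have hlogb := hasDerivAt_logb 2 hx0
  refine (hlogb.div ((hlogb.const_add 4).logb 2 ht |>.pow 3) (pow_ne_zero 3 hD.ne')).congr_deriv ?_
  rw [Pi.pow_apply, hlog]
  field_simp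
  ring

theorem three_mul_sub_four_le_mul_log {t : ℝ} (ht : 27 ≤ t) :
    3 * (t - 4) ≤ 0.778 * (t * log t) := by
  -- `log 27 > 19/4 · log 2 > 3.29`; the inequality is nearly tight at `t = 27`.
  have hlog27 : 19 * log 2 < 4 * log 27 := by
    have h := log_lt_log (by positivity) (show (2 : ℝ) ^ 19 < 27 ^ 4 by norm_num)
    rwa [log_pow, log_pow] at h
  have htangent : t * (log 27 + 1) - 27 ≤ t * log t := by
    have h := log_le_sub_one_of_pos (show 0 < 27 / t by positivity)
    rw [log_div (by norm_num) (by positivity), le_sub_iff_add_le, le_div_iff₀ (by positivity)] at h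
    linarith
  have hlog27' : 0 ≤ log 27 - 3.29 := by linarith [log_two_gt_d9]
  nlinarith [mul_le_mul_of_nonneg_right ht hlog27']

theorem deriv_ft_ge {x : ℝ} (hx : (3000 : ℝ) ^ 2 ≤ x) :
    deriv ft x ≥ 0.32 / (x * (logb 2 (4 + logb 2 x)) ^ 3) := by
  have hx1 : 1 ≤ x := by linarith
  have hu : 23 ≤ logb 2 x := by
    calc (23 : ℝ) = logb 2 (2 ^ 23) := by rw [logb_pow, logb_self_eq_one one_lt_two]; norm_num
      _ ≤ logb 2 x := logb_le_logb_of_le one_lt_two (by norm_num) (by linarith)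
  have hD : 0 < logb 2 (4 + logb 2 x) := by
    linarith [two_le_logb_two_four_add (u := logb 2 x) (by linarith)]
  have hcoeff : 0.32 * log 2 ≤ 1 - 3 * logb 2 x / ((4 + logb 2 x) * log (4 + logb 2 x)) := by
    have htlog : 0 < (4 + logb 2 x) * log (4 + logb 2 x) := by
      have := log_pos (show (1 : ℝ) < 4 + logb 2 x by linarith); positivity
    have h := three_mul_sub_four_le_mul_log (show 27 ≤ 4 + logb 2 x by linarith)
    rw [add_sub_cancel_left] at h
    have : 3 * logb 2 x / ((4 + logb 2 x) * log (4 + logb 2 x)) ≤ 0.778 := by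
      rwa [div_le_iff₀ htlog]
    linarith [log_two_lt_d9]
  rw [(hasDerivAt_ft hx1).deriv, ge_iff_le]
  calc 0.32 / (x * logb 2 (4 + logb 2 x) ^ 3)
      = 0.32 * log 2 / (x * log 2 * logb 2 (4 + logb 2 x) ^ 3) := by
        field_simp [(log_pos one_lt_two).ne']
    _ ≤ _ := div_le_div_of_nonneg_right hcoeff (by positivity)

theorem stmt_17 :
    (∀ x y : ℝ, 1 ≤ x → 0 ≤ y → ft (x + y) ≤ ft x + 1.5 * y) ∧
    (∀ x : ℝ, (3000 : ℝ) ^ 2 ≤ x →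
      deriv ft x ≥ 0.32 / (x * (Real.logb 2 (4 + Real.logb 2 x)) ^ 3)) :=
  ⟨fun _ _ hx hy => ft_add_le hx hy, fun _ hx => deriv_ft_ge hx⟩
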